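/- Murnaghan–Nakayama rule (alternant form; the case m = 1 of the plethystic rule). Let μ be a partition, let r be a positive integer, and let N be an integer with N ≥ |μ| + r. Then in ℤ[x_1, …, x_N] one has a_{μ+δ(N)} · p_r = Σ_λ sgn(λ/μ) · a_{λ+δ(N)}, where the sum runs over all partitions λ of size |μ| + r with μ ⊆ λ such that λ/μ is an r-border strip. -/

import Mathlib

open MvPolynomial Finset Classical

noncomputable section

/-- A partition: an antitone finitely supported function `ℕ → ℕ`.
`l.part i` is the `(i+1)`-st part `λ_{i+1}` (0-based indexing). -/
def Ptn : Type := {f : ℕ →₀ ℕ // Antitone (f : ℕ → ℕ)}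

namespace Ptn

/-- `l.part i = λ_{i+1}` (0-based indexing of the parts). -/
def part (l : Ptn) (i : ℕ) : ℕ := l.1 i

/-- The size `|λ|`. -/
def size (l : Ptn) : ℕ := l.1.sum fun _ v => v

/-- `Sub m l` means `μ ⊆ λ` (containment of Young diagrams). -/
def Sub (m l : Ptn) : Prop := ∀ i, m.part i ≤ l.part i

/-- The Young diagram (0-based): box `(i,j)` corresponds to row `i+1`, column `j+1`. -/
def cells (l : Ptn) : Set (ℕ × ℕ) := {c | c.2 < l.part c.1}

/-- The Young diagram of the skew partition `λ/μ`. -/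
def skew (m l : Ptn) : Set (ℕ × ℕ) := l.cells \ m.cells

/-- The top `t(λ/μ)`: `0` if `λ = μ` and otherwise the least (1-based) `i` with `λ_i ≠ μ_i`. -/
def top (m l : Ptn) : ℕ := if m = l then 0 else sInf {i | m.part i ≠ l.part i} + 1

/-- The bottom `b(λ/μ)`: `0` if `λ = μ` and otherwise the greatest (1-based) `i` with `λ_i ≠ μ_i`. -/
def bot (m l : Ptn) : ℕ := if m = l then 0 else sSup {i | m.part i ≠ l.part i} + 1

end Ptn

/-- Two boxes are edge-adjacent (horizontally or vertically). -/
def Adjacent (c d : ℕ × ℕ) : Prop :=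
  (c.1 = d.1 ∧ (c.2 + 1 = d.2 ∨ d.2 + 1 = c.2)) ∨
  (c.2 = d.2 ∧ (c.1 + 1 = d.1 ∨ d.1 + 1 = c.1))

/-- A set of boxes is connected via edge-adjacency. -/
def ConnectedSet (S : Set (ℕ × ℕ)) : Prop :=
  ∀ c ∈ S, ∀ d ∈ S, Relation.ReflTransGen (fun x y => y ∈ S ∧ Adjacent x y) c d

/-- `λ/μ` is an `r`-border strip. -/
def IsBorderStrip (r : ℕ) (m l : Ptn) : Prop :=
  Ptn.Sub m l ∧ l.size = m.size + r ∧ ConnectedSet (Ptn.skew m l) ∧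
    ∀ c ∈ Ptn.skew m l, (c.1 + 1, c.2 + 1) ∉ Ptn.skew m l

/-- The sign `(-1)^(b(λ/μ) - t(λ/μ))` of a border strip `λ/μ`. -/
def stripSgn (m l : Ptn) : ℤ := (-1) ^ (Ptn.bot m l - Ptn.top m l)

/-- A chain `μ = γ⁽⁰⁾ ⊆ … ⊆ γ⁽ᵈ⁾ = λ` of `r`-border strips with non-increasing tops. -/
def RChain (r : ℕ) (m l : Ptn) (d : ℕ) (γ : ℕ → Ptn) : Prop :=
  γ 0 = m ∧ γ d = l ∧ (∀ i < d, IsBorderStrip r (γ i) (γ (i + 1))) ∧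
    ∀ i, i + 1 < d → Ptn.top (γ (i + 1)) (γ (i + 2)) ≤ Ptn.top (γ i) (γ (i + 1))

/-- `λ/μ` is `r`-decomposable. -/
def RDecomposable (r : ℕ) (m l : Ptn) : Prop := ∃ d γ, RChain r m l d γ

/-- `sgn_r(λ/μ)`: the product of the signs of the border strips in a decomposition chain,
or `0` if `λ/μ` is not `r`-decomposable. -/
def sgnr (r : ℕ) (m l : Ptn) : ℤ :=
  if h : RDecomposable r m l then
    ∏ i ∈ Finset.range h.choose,
      stripSgn (h.choose_spec.choose i) (h.choose_spec.choose (i + 1))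
  else 0

/-- The alternant `a_{λ+δ(N)} = det(x_i^{λ_j + N - j})`. -/
def altPoly (N : ℕ) (l : Ptn) : MvPolynomial (Fin N) ℤ :=
  Matrix.det (Matrix.of fun i j : Fin N =>
    (X i : MvPolynomial (Fin N) ℤ) ^ (l.part j + (N - 1 - (j : ℕ))))

/-- The compositions of `m` of length `N`. -/
def comps (N m : ℕ) : Finset (Fin N → ℕ) :=
  (Fintype.piFinset fun _ => Finset.range (m + 1)).filter fun β => ∑ i, β i = m

/-- The complete homogeneous symmetric polynomial `h_m` in `N` variables. -/
def hPoly (N m : ℕ) : MvPolynomial (Fin N) ℤ :=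
  ∑ β ∈ comps N m, ∏ i, X i ^ β i

/-- The power sum `p_r` in `N` variables. -/
def pPoly (N r : ℕ) : MvPolynomial (Fin N) ℤ :=
  ∑ i : Fin N, X i ^ r

/-- The plethysm `p_r ∘ h_m = Σ_{β ∈ Com_N(m)} x^{rβ}` in `N` variables. -/
def prhm (N r m : ℕ) : MvPolynomial (Fin N) ℤ :=
  ∑ β ∈ comps N m, ∏ i, X i ^ (r * β i)

/-- A labelled abacus with `N` beads: a sequence `w : ℕ → ℕ` whose nonzero entries are
precisely `1, …, N`, each occurring exactly once. -/
structure Abacus (N : ℕ) where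
  w : ℕ → ℕ
  w_le : ∀ i, w i ≤ N
  uniq : ∀ B : ℕ, 1 ≤ B → B ≤ N → ∃! i, w i = B

namespace Abacus

variable {N : ℕ}

/-- `a.pos B` is the position `w⁻¹(B+1)` of bead `B+1` (beads indexed by `Fin N`, 0-based:
`B : Fin N` stands for the bead labelled `B+1`). -/
def pos (a : Abacus N) (B : Fin N) : ℕ :=
  (a.uniq ((B : ℕ) + 1) (Nat.le_add_left 1 B) B.isLt).choose

lemma pos_spec (a : Abacus N) (B : Fin N) : a.w (a.pos B) = (B : ℕ) + 1 :=
  (a.uniq ((B : ℕ) + 1) (Nat.le_add_left 1 B) B.isLt).choose_spec.1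

lemma pos_injective (a : Abacus N) : Function.Injective a.pos := by
  intro B C h
  have hB := a.pos_spec B
  have hC := a.pos_spec C
  rw [h, hC] at hB
  exact Fin.ext (by omega)

/-- The support of a labelled abacus: the set of occupied positions. -/
def suppF (a : Abacus N) : Finset ℕ := Finset.image a.pos Finset.univ

lemma card_suppF (a : Abacus N) : a.suppF.card = N := by
  rw [suppF, Finset.card_image_of_injective _ a.pos_injective, Finset.card_univ,
    Fintype.card_fin]

/-- `a.iota t` is `ι_{t+1}(w)`, the `(t+1)`-st largest occupied position (`t : Fin N`, 0-based). -/
def iota (a : Abacus N) (t : Fin N) : ℕ :=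
  (Finset.sort a.suppF (· ≤ ·)).getD (N - 1 - (t : ℕ)) 0

lemma length_sort_suppF (a : Abacus N) : (Finset.sort a.suppF (· ≤ ·)).length = N := by
  rw [Finset.length_sort, a.card_suppF]

lemma iota_mem (a : Abacus N) (t : Fin N) : a.iota t ∈ a.suppF := by
  have hlt : N - 1 - (t : ℕ) < (Finset.sort a.suppF (· ≤ ·)).length := by
    rw [a.length_sort_suppF]
    have := t.isLt
    omega
  rw [iota, List.getD_eq_getElem _ _ hlt]
  exact (Finset.mem_sort (α := ℕ) (· ≤ ·)).mp (List.getElem_mem hlt)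

lemma iota_injective (a : Abacus N) : Function.Injective a.iota := by
  intro t t' h
  have hn : (Finset.sort a.suppF (· ≤ ·)).Nodup := Finset.sort_nodup _ _
  have h1 : N - 1 - (t : ℕ) < (Finset.sort a.suppF (· ≤ ·)).length := by
    rw [a.length_sort_suppF]; have := t.isLt; omega
  have h2 : N - 1 - (t' : ℕ) < (Finset.sort a.suppF (· ≤ ·)).length := by
    rw [a.length_sort_suppF]; have := t'.isLt; omega
  rw [iota, iota, List.getD_eq_getElem _ _ h1, List.getD_eq_getElem _ _ h2] at h
  have := (List.Nodup.getElem_inj_iff hn (hi := h1) (hj := h2)).mp h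
  have ht := t.isLt
  have ht' := t'.isLt
  exact Fin.ext (by omega)

lemma one_le_w_iota (a : Abacus N) (t : Fin N) : 1 ≤ a.w (a.iota t) := by
  obtain ⟨B, -, hB⟩ := Finset.mem_image.mp (a.iota_mem t)
  rw [← hB, a.pos_spec]
  omega

/-- The permutation `σ_w ∈ S_N` (on `Fin N`, 0-based): `σ_w(B) = w_{ι_{B+1}(w)}`. -/
def sigma (a : Abacus N) : Equiv.Perm (Fin N) :=
  Equiv.ofBijective
    (fun t => (⟨a.w (a.iota t) - 1, by
        have h1 := a.one_le_w_iota t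
        have h2 := a.w_le (a.iota t)
        omega⟩ : Fin N))
    (Finite.injective_iff_bijective.mp (by
      intro t t' h
      have h1 := a.one_le_w_iota t
      have h1' := a.one_le_w_iota t'
      have hv : a.w (a.iota t) = a.w (a.iota t') := by
        have := congrArg Fin.val h
        simp only at this
        omega
      have hu := a.uniq (a.w (a.iota t)) h1 (a.w_le _)
      obtain ⟨i, -, hi⟩ := hu
      have e1 := hi (a.iota t) rfl
      have e2 := hi (a.iota t') hv.symm
      exact a.iota_injective (e1.trans e2.symm)))

/-- The sign `sgn(w)` of a labelled abacus: the sign of `σ_w`. -/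
def sgn (a : Abacus N) : ℤ := Equiv.Perm.sign a.sigma

/-- The weight `wt(w) = ∏_{i ∈ supp(w)} x_{w_i}^i`: the variable `X B` is `x_{B+1}`. -/
def wt (a : Abacus N) : MvPolynomial (Fin N) ℤ :=
  ∏ B : Fin N, X B ^ a.pos B


end Abacus

namespace Abacus

variable {N : ℕ}

/-- `a.HasShape l` says that the shape `sh(w) = (ι_1(w) - (N-1), ι_2(w) - (N-2), …, ι_N(w))`
of the abacus equals the partition `l` (stated additively: `ι_{t+1}(w) = l_{t+1} + (N-1-t)`). -/
def HasShape (a : Abacus N) (l : Ptn) : Prop :=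
  (∀ t : Fin N, l.part t + (N - 1 - (t : ℕ)) = a.iota t) ∧ ∀ i, N ≤ i → l.part i = 0

end Abacus

/-- `IsRMove r a a' i`: the abacus `a'` is obtained from `a` by `r`-moving the bead
at position `i` (to position `i + r`). -/
def IsRMove {N : ℕ} (r : ℕ) (a a' : Abacus N) (i : ℕ) : Prop :=
  a.w i ≠ 0 ∧ a.w (i + r) = 0 ∧ a'.w i = 0 ∧ a'.w (i + r) = a.w i ∧
    ∀ j, j ≠ i → j ≠ i + r → a'.w j = a.w j

/-- `SeriesRMoves r m a a' idx`: the abacus `a'` is obtained from `a` by a series of `m`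
`r`-moves of beads from positions `idx 0 < idx 1 < … < idx (m-1)`. -/
def SeriesRMoves {N : ℕ} (r m : ℕ) (a a' : Abacus N) (idx : Fin m → ℕ) : Prop :=
  StrictMono idx ∧ ∃ v : Fin (m + 1) → Abacus N, v 0 = a ∧ v (Fin.last m) = a' ∧
    ∀ j : Fin m, IsRMove r (v j.castSucc) (v j.succ) (idx j)

/-- The set `K_N^{r,m}(μ,λ)`: sequences `(w⁽⁰⁾, …, w⁽ᵐ⁾)` of labelled abaci with `N` beads,
of shapes `μ` and `λ` at the two ends, where `w⁽ʲ⁾` is obtained from `w⁽ʲ⁻¹⁾` by `r`-moving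
a bead from position `i_j`, with `i_1 < i_2 < … < i_m`. -/
def KSet (N r m : ℕ) (mu lam : Ptn) (v : Fin (m + 1) → Abacus N) : Prop :=
  (v 0).HasShape mu ∧ (v (Fin.last m)).HasShape lam ∧
    ∃ idx : Fin m → ℕ, StrictMono idx ∧
      ∀ j : Fin m, IsRMove r (v j.castSucc) (v j.succ) (idx j)

/-- Bead `B+1` is left-`r`-mobile in `a`: its position is at least `r` and the position `r`
steps to the left is empty. -/
def IsLeftRMobile {N : ℕ} (a : Abacus N) (r : ℕ) (B : Fin N) : Prop :=
  r ≤ a.pos B ∧ a.w (a.pos B - r) = 0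

/-- `IsLeftRMove a r B a'`: the abacus `a'` is obtained from `a` by `r`-moving bead `B+1`
leftwards. -/
def IsLeftRMove {N : ℕ} (a : Abacus N) (r : ℕ) (B : Fin N) (a' : Abacus N) : Prop :=
  r ≤ a.pos B ∧ a'.w (a.pos B - r) = (B : ℕ) + 1 ∧ a'.w (a.pos B) = 0 ∧
    ∀ j, j ≠ a.pos B - r → j ≠ a.pos B → a'.w j = a.w j

def Dpoly (N : ℕ) (γ : Fin N → ℕ) : MvPolynomial (Fin N) ℤ :=
  Matrix.det (Matrix.of fun i j : Fin N => (X i : MvPolynomial (Fin N) ℤ) ^ γ j)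

lemma detMulP (N r : ℕ) (γ : Fin N → ℕ) :
    Dpoly N γ * pPoly N r = ∑ k : Fin N, Dpoly N (fun j => γ j + if j = k then r else 0) := by
  unfold Dpoly pPoly
  rw [Matrix.det_apply, Finset.sum_mul]
  simp only [Matrix.det_apply]
  rw [Finset.sum_comm]
  refine Finset.sum_congr rfl fun σ _ => ?_
  set P : MvPolynomial (Fin N) ℤ :=
    ∏ i, (Matrix.of fun i j : Fin N => (X i : MvPolynomial (Fin N) ℤ) ^ γ j) (σ i) i with hP
  have key : ∀ k : Fin N, (∏ i, (Matrix.of fun i j : Fin N => (X i : MvPolynomial (Fin N) ℤ) ^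
      (γ j + if j = k then r else 0)) (σ i) i) = P * (X (σ k) : MvPolynomial (Fin N) ℤ) ^ r := by
    intro k
    have : ∀ i : Fin N, (Matrix.of fun i j : Fin N => (X i : MvPolynomial (Fin N) ℤ) ^
        (γ j + if j = k then r else 0)) (σ i) i
        = ((Matrix.of fun i j : Fin N => (X i : MvPolynomial (Fin N) ℤ) ^ γ j) (σ i) i) *
          (X (σ i) : MvPolynomial (Fin N) ℤ) ^ (if i = k then r else 0) := by
      intro i; simp [Matrix.of_apply, pow_add]
    rw [Finset.prod_congr rfl fun i _ => this i, Finset.prod_mul_distrib, hP]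
    congr 1
    rw [Finset.prod_eq_single k (fun b _ hb => by simp [hb]) (by simp)]
    simp
  calc Equiv.Perm.sign σ • P * ∑ i : Fin N, (X i : MvPolynomial (Fin N) ℤ) ^ r
      = ∑ t : Fin N, Equiv.Perm.sign σ • (P * (X t : MvPolynomial (Fin N) ℤ) ^ r) := by
        rw [smul_mul_assoc, Finset.mul_sum, Finset.smul_sum]
    _ = ∑ k : Fin N, Equiv.Perm.sign σ • (P * (X (σ k) : MvPolynomial (Fin N) ℤ) ^ r) :=
        (Equiv.sum_comp σ (fun t => Equiv.Perm.sign σ • (P * (X t : MvPolynomial (Fin N) ℤ) ^ r))).symm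
    _ = _ := by exact Finset.sum_congr rfl fun k _ => by rw [key k]

lemma Dpoly_swap (N : ℕ) (γ : Fin N → ℕ) (a b : Fin N) (hab : a ≠ b) :
    Dpoly N (γ ∘ Equiv.swap a b) = - Dpoly N γ := by
  have := Matrix.det_permute' (Equiv.swap a b)
    (Matrix.of fun i j : Fin N => (X i : MvPolynomial (Fin N) ℤ) ^ γ j)
  rw [Equiv.Perm.sign_swap hab] at this
  unfold Dpoly
  have h2 : (Matrix.of fun i j : Fin N => (X i : MvPolynomial (Fin N) ℤ) ^ (γ ∘ Equiv.swap a b) j)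
      = (Matrix.of fun i j : Fin N => (X i : MvPolynomial (Fin N) ℤ) ^ γ j).submatrix id
        (Equiv.swap a b) := by
    ext i j; simp [Matrix.submatrix_apply]
  rw [h2, this]; push_cast; ring

def shiftIns (γ : ℕ → ℕ) (t k v : ℕ) : ℕ → ℕ := fun j =>
  if j < t then γ j else if j = t then v else if j ≤ k then γ (j - 1) else γ j

lemma sortDet (N : ℕ) (γ : ℕ → ℕ) (k : ℕ) (hk : k < N) (v : ℕ) :
    ∀ d t, t + d = k →
      Dpoly N (fun j : Fin N => Function.update γ k v (j : ℕ)) =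
        (-1 : MvPolynomial (Fin N) ℤ) ^ d * Dpoly N (fun j : Fin N => shiftIns γ t k v (j : ℕ)) := by
  intro d
  induction d with
  | zero =>
    intro t ht
    have htk : t = k := by omega
    subst htk
    have hEq : (fun j : Fin N => shiftIns γ t t v (j : ℕ))
        = (fun j : Fin N => Function.update γ t v (j : ℕ)) := by
      funext j
      simp only [shiftIns, Function.update_apply]
      rcases lt_trichotomy (j : ℕ) t with h | h | h
      · rw [if_pos h, if_neg (by omega)]
      · simp [h]
      · rw [if_neg (by omega), if_neg (by omega), if_neg (by omega), if_neg (by omega)]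
    rw [hEq]; ring
  | succ d ih =>
    intro t ht
    have ht1 : t + 1 + d = k := by omega
    have htk : t < k := by omega
    have htN : t + 1 < N := by omega
    have hswap : (fun j : Fin N => shiftIns γ t k v (j : ℕ))
        = (fun j : Fin N => shiftIns γ (t + 1) k v (j : ℕ)) ∘
          Equiv.swap (⟨t, by omega⟩ : Fin N) ⟨t + 1, htN⟩ := by
      funext j
      simp only [Function.comp_apply]
      rcases eq_or_ne (j : ℕ) t with h | h
      · have : j = (⟨t, by omega⟩ : Fin N) := Fin.ext h
        rw [this, Equiv.swap_apply_left]
        simp only [shiftIns]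
        split_ifs <;> first | rfl | omega | (congr 1; omega)
      · rcases eq_or_ne (j : ℕ) (t + 1) with h2 | h2
        · have : j = (⟨t + 1, htN⟩ : Fin N) := Fin.ext h2
          rw [this, Equiv.swap_apply_right]
          simp only [shiftIns]
          split_ifs <;> first | rfl | omega | (congr 1; omega)
        · rw [Equiv.swap_apply_of_ne_of_ne (fun hc => h (by rw [hc])) (fun hc => h2 (by rw [hc]))]
          simp only [shiftIns]
          rcases lt_trichotomy (j : ℕ) t with h3 | h3 | h3
          · rw [if_pos h3, if_pos (by omega : (j:ℕ) < t + 1)]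
          · exact absurd h3 h
          · have : ¬ ((j : ℕ) < t) := by omega
            have h4 : ¬ ((j : ℕ) < t + 1) := by omega
            simp [this, h, h2, h4]
    rw [hswap, Dpoly_swap N _ _ _ (by simp [Fin.ext_iff]), ih (t + 1) ht1]
    ring
lemma Ptn.ext' {l m : Ptn} (h : ∀ i, l.part i = m.part i) : l = m :=
  Subtype.ext (Finsupp.ext h)

lemma Ptn.anti (l : Ptn) : Antitone l.part := l.2

lemma Ptn.sum_range_le (l : Ptn) (n : ℕ) : ∑ i ∈ Finset.range n, l.part i ≤ l.size := by
  have h1 : ∑ i ∈ Finset.range n ∩ l.1.support, l.1 i = ∑ i ∈ Finset.range n, l.1 i :=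
    Finset.sum_subset Finset.inter_subset_left (fun x hx hx2 => by
      have : x ∉ l.1.support := fun hs => hx2 (Finset.mem_inter.2 ⟨hx, hs⟩)
      exact Finsupp.notMem_support_iff.1 this)
  have h2 : ∑ i ∈ Finset.range n ∩ l.1.support, l.1 i ≤ ∑ i ∈ l.1.support, l.1 i :=
    Finset.sum_le_sum_of_subset Finset.inter_subset_right
  have h3 : l.size = ∑ i ∈ l.1.support, l.1 i := rfl
  simp only [Ptn.part]
  rw [h3, ← h1]; exact h2

lemma Ptn.lt_size_of_part_ne_zero (l : Ptn) {i : ℕ} (h : l.part i ≠ 0) : i < l.size := by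
  have h1 : ∀ j ∈ Finset.range (i + 1), 1 ≤ l.part j := fun j hj => by
    have := l.anti (Nat.le_of_lt_succ (Finset.mem_range.1 hj))
    omega
  have h2 : i + 1 ≤ ∑ j ∈ Finset.range (i + 1), l.part j := by
    calc i + 1 = ∑ _j ∈ Finset.range (i + 1), 1 := by simp
    _ ≤ _ := Finset.sum_le_sum h1
  have := l.sum_range_le (i + 1)
  omega

lemma Ptn.part_eq_zero (l : Ptn) {i : ℕ} (h : l.size ≤ i) : l.part i = 0 := by
  by_contra hc
  exact absurd (l.lt_size_of_part_ne_zero hc) (by omega)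

lemma Ptn.size_eq_sum (l : Ptn) {n : ℕ} (h : l.size ≤ n) :
    l.size = ∑ i ∈ Finset.range n, l.part i := by
  have h3 : l.size = ∑ i ∈ l.1.support, l.1 i := rfl
  rw [h3]
  simp only [Ptn.part]
  refine Finset.sum_subset (fun x hx => Finset.mem_range.2 ?_) (fun x _ hx => ?_)
  · have := l.lt_size_of_part_ne_zero (Finsupp.mem_support_iff.1 hx)
    omega
  · exact Finsupp.notMem_support_iff.1 hx

/-- `β_j = μ_{j+1} + (N - 1 - j)` (0-based). -/
def bet (mu : Ptn) (N : ℕ) : ℕ → ℕ := fun j => mu.part j + (N - 1 - j)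

lemma bet_lt (mu : Ptn) (N : ℕ) {i j : ℕ} (hij : i < j) (hj : j < N) :
    bet mu N j < bet mu N i := by
  have := mu.anti (le_of_lt hij)
  unfold bet
  omega

lemma bet_le (mu : Ptn) (N : ℕ) {i j : ℕ} (hij : i ≤ j) : bet mu N j ≤ bet mu N i := by
  have := mu.anti hij
  unfold bet
  omega

lemma altPoly_eq_Dpoly (N : ℕ) (l : Ptn) :
    altPoly N l = Dpoly N (fun j : Fin N => bet l N j) := rfl

/-- `k` is a collision-free (good) bump index. -/
def GoodK (mu : Ptn) (r N k : ℕ) : Prop := ∀ j, j < N → bet mu N j ≠ bet mu N k + r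

/-- The insertion position for the bumped value. -/
def tOf (mu : Ptn) (r N k : ℕ) : ℕ := sInf {i | bet mu N i < bet mu N k + r}

section Facts

variable (mu : Ptn) (r N k : ℕ)

lemma tOf_lt (hr : 0 < r) : bet mu N (tOf mu r N k) < bet mu N k + r := by
  have h : {i | bet mu N i < bet mu N k + r}.Nonempty := ⟨k, by simp only [Set.mem_setOf_eq]; omega⟩
  exact Nat.sInf_mem h

lemma tOf_le (hr : 0 < r) : tOf mu r N k ≤ k :=
  Nat.sInf_le (by simp only [Set.mem_setOf_eq]; omega)

lemma tOf_gt (hr : 0 < r) (hk : k < N) (hg : GoodK mu r N k) {i : ℕ} (hi : i < tOf mu r N k) :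
    bet mu N k + r < bet mu N i := by
  have h1 : i ∉ {i | bet mu N i < bet mu N k + r} := Nat.notMem_of_lt_sInf hi
  simp only [Set.mem_setOf_eq, not_lt] at h1
  have h2 := hg i (by have := tOf_le mu r N k hr; omega)
  omega

lemma tOf_lt_N (hr : 0 < r) (hk : k < N) : tOf mu r N k < N :=
  lt_of_le_of_lt (tOf_le mu r N k hr) hk

/-- The parts of the bumped partition `λ`. -/
def lamF : ℕ → ℕ := fun i =>
  if i < tOf mu r N k then mu.part i
  else if i = tOf mu r N k then bet mu N k + r - (N - 1 - tOf mu r N k)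
  else if i ≤ k then mu.part (i - 1) + 1
  else mu.part i

variable (hr : 0 < r) (hN : mu.size + r ≤ N) (hk : k < N) (hg : GoodK mu r N k)
include hr hk

lemma bet_tOf_ge : N - 1 - tOf mu r N k ≤ bet mu N k + r := by
  have h2 := tOf_lt mu r N k hr
  unfold bet at h2 ⊢
  omega

lemma lamF_add_eq (i : ℕ) :
    lamF mu r N k i + (N - 1 - i) = shiftIns (bet mu N) (tOf mu r N k) k (bet mu N k + r) i := by
  have h1 := tOf_le mu r N k hr
  have h4 := bet_tOf_ge mu r N k hr hk
  simp only [lamF, shiftIns, bet] at h4 ⊢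
  split_ifs <;> omega

include hg

lemma lamF_anti : Antitone (lamF mu r N k) := by
  apply antitone_nat_of_succ_le
  intro i
  set T := tOf mu r N k with hT
  have h1 : T ≤ k := tOf_le mu r N k hr
  have h2 : mu.part T + (N - 1 - T) < mu.part k + (N - 1 - k) + r := by
    have := tOf_lt mu r N k hr; unfold bet at this; exact this
  have h4 : N - 1 - T ≤ mu.part k + (N - 1 - k) + r := by
    have := bet_tOf_ge mu r N k hr hk; unfold bet at this; exact this
  have ha1 : mu.part (i + 1) ≤ mu.part i := mu.anti (by omega)
  simp only [lamF, bet, ← hT]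
  rcases Nat.lt_trichotomy (i + 1) T with hc | hc | hc
  · rw [if_pos hc, if_pos (show i < T by omega)]; exact ha1
  · have h3 : mu.part k + (N - 1 - k) + r < mu.part i + (N - 1 - i) := by
      have := tOf_gt mu r N k hr hk hg (show i < T by omega)
      unfold bet at this; exact this
    rw [if_neg (show ¬ i + 1 < T by omega), if_pos hc, if_pos (show i < T by omega)]
    omega
  · rcases eq_or_lt_of_le (show T ≤ i by omega) with hd | hd
    · have he : mu.part i = mu.part T := by rw [hd]
      by_cases hik : i + 1 ≤ k
      · rw [if_neg (show ¬ i + 1 < T by omega), if_neg (show ¬ i + 1 = T by omega),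
          if_pos hik, if_neg (show ¬ i < T by omega), if_pos hd.symm]
        simp only [Nat.add_sub_cancel]
        omega
      · rw [if_neg (show ¬ i + 1 < T by omega), if_neg (show ¬ i + 1 = T by omega),
          if_neg hik, if_neg (show ¬ i < T by omega), if_pos hd.symm]
        have ha3 : mu.part (i + 1) ≤ mu.part k := mu.anti (by omega)
        omega
    · have ha2 : mu.part i ≤ mu.part (i - 1) := mu.anti (by omega)
      by_cases hik : i + 1 ≤ k
      · rw [if_neg (show ¬ i + 1 < T by omega), if_neg (show ¬ i + 1 = T by omega),
          if_pos hik, if_neg (show ¬ i < T by omega), if_neg (show ¬ i = T by omega),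
          if_pos (show i ≤ k by omega)]
        simp only [Nat.add_sub_cancel]
        omega
      · by_cases hik2 : i ≤ k
        · rw [if_neg (show ¬ i + 1 < T by omega), if_neg (show ¬ i + 1 = T by omega),
            if_neg hik, if_neg (show ¬ i < T by omega), if_neg (show ¬ i = T by omega),
            if_pos hik2]
          have : mu.part (i + 1) ≤ mu.part (i - 1) := mu.anti (by omega)
          omega
        · rw [if_neg (show ¬ i + 1 < T by omega), if_neg (show ¬ i + 1 = T by omega),
            if_neg (show ¬ i + 1 ≤ k by omega), if_neg (show ¬ i < T by omega),
            if_neg (show ¬ i = T by omega), if_neg hik2]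
          exact ha1

include hN

lemma lamF_zero {i : ℕ} (hi : N ≤ i) : lamF mu r N k i = 0 := by
  have h1 := tOf_le mu r N k hr
  have hz : mu.part i = 0 := mu.part_eq_zero (by omega)
  simp only [lamF]
  rw [if_neg (by omega), if_neg (by omega), if_neg (by omega)]
  exact hz

/-- The bumped partition `λ` associated to a good index `k`. -/
def lamOf : Ptn :=
  ⟨Finsupp.onFinset (Finset.range N) (lamF mu r N k)
    (fun i h => Finset.mem_range.2 (by
      by_contra hc
      exact h (lamF_zero mu r N k hr hN hk hg (by omega)))),
    lamF_anti mu r N k hr hk hg⟩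

lemma lamOf_part (i : ℕ) : (lamOf mu r N k hr hN hk hg).part i = lamF mu r N k i := rfl

end Facts
section Facts2

variable (mu : Ptn) (r N k : ℕ) (hr : 0 < r) (hN : mu.size + r ≤ N) (hk : k < N)
  (hg : GoodK mu r N k)

include hr hk

lemma sum_lamF :
    ∑ i ∈ Finset.range N, lamF mu r N k i = (∑ i ∈ Finset.range N, mu.part i) + r := by
  set T := tOf mu r N k with hT
  have h1 : T ≤ k := tOf_le mu r N k hr
  have h4 : N - 1 - T ≤ mu.part k + (N - 1 - k) + r := by
    have := bet_tOf_ge mu r N k hr hk; unfold bet at this; exact this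
  have hsplit : ∀ f : ℕ → ℕ, ∑ i ∈ Finset.range N, f i =
      ((∑ i ∈ Finset.Ico 0 T, f i) + (∑ i ∈ Finset.Ico T (k + 1), f i)) +
        (∑ i ∈ Finset.Ico (k + 1) N, f i) := by
    intro f
    rw [Finset.range_eq_Ico,
      ← Finset.sum_Ico_consecutive f (Nat.zero_le (k + 1)) (show k + 1 ≤ N by omega),
      ← Finset.sum_Ico_consecutive f (Nat.zero_le T) (show T ≤ k + 1 by omega)]
  rw [hsplit, hsplit]
  have e1 : ∑ i ∈ Finset.Ico 0 T, lamF mu r N k i = ∑ i ∈ Finset.Ico 0 T, mu.part i :=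
    Finset.sum_congr rfl (fun i hi => by
      have h := (Finset.mem_Ico.1 hi).2
      simp only [lamF, ← hT]; rw [if_pos h])
  have e3 : ∑ i ∈ Finset.Ico (k + 1) N, lamF mu r N k i
      = ∑ i ∈ Finset.Ico (k + 1) N, mu.part i :=
    Finset.sum_congr rfl (fun i hi => by
      have h := (Finset.mem_Ico.1 hi).1
      simp only [lamF, ← hT]
      rw [if_neg (by omega), if_neg (by omega), if_neg (by omega)])
  have e2 : ∑ i ∈ Finset.Ico T (k + 1), lamF mu r N k i
      = (mu.part k + (N - 1 - k) + r - (N - 1 - T))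
        + ((∑ i ∈ Finset.Ico T k, mu.part i) + (k - T)) := by
    rw [Finset.sum_eq_sum_Ico_succ_bot (show T < k + 1 by omega)]
    congr 1
    · simp [lamF, bet, ← hT]
    · have hc : ∀ i ∈ Finset.Ico (T + 1) (k + 1), lamF mu r N k i = mu.part (i - 1) + 1 :=
        fun i hi => by
          have h := Finset.mem_Ico.1 hi
          simp only [lamF, ← hT]
          rw [if_neg (by omega), if_neg (by omega), if_pos (by omega)]
      rw [Finset.sum_congr rfl hc, Finset.sum_add_distrib, Finset.sum_const, Nat.card_Ico,
        smul_eq_mul, mul_one]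
      congr 1
      · rw [Finset.sum_Ico_eq_sum_range, Finset.sum_Ico_eq_sum_range]
        refine Finset.sum_congr (by congr 1 <;> omega) (fun j hj => by congr 1; omega)
      · omega
  have e2' : ∑ i ∈ Finset.Ico T (k + 1), mu.part i
      = (∑ i ∈ Finset.Ico T k, mu.part i) + mu.part k :=
    Finset.sum_Ico_succ_top (by omega) _
  rw [e1, e3, e2, e2']
  omega

include hN hg

lemma lamOf_size : (lamOf mu r N k hr hN hk hg).size = mu.size + r := by
  have hs : (lamOf mu r N k hr hN hk hg).size = ∑ i ∈ Finset.range N, lamF mu r N k i := by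
    have h3 : (lamOf mu r N k hr hN hk hg).size
        = ∑ i ∈ (lamOf mu r N k hr hN hk hg).1.support, (lamOf mu r N k hr hN hk hg).1 i := rfl
    rw [h3]
    have hstep : ∑ i ∈ (lamOf mu r N k hr hN hk hg).1.support,
        (lamOf mu r N k hr hN hk hg).1 i = ∑ i ∈ Finset.range N,
        (lamOf mu r N k hr hN hk hg).1 i := by
      refine Finset.sum_subset (fun x hx => Finset.mem_range.2 ?_)
        (fun x _ hx2 => Finsupp.notMem_support_iff.1 hx2)
      by_contra hc
      have hne : lamF mu r N k x ≠ 0 := Finsupp.mem_support_iff.1 hx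
      exact hne (lamF_zero mu r N k hr hN hk hg (by omega))
    rw [hstep]
    exact Finset.sum_congr rfl (fun i _ => rfl)
  rw [hs, sum_lamF mu r N k hr hk, ← mu.size_eq_sum (by omega)]

lemma lamF_ge (i : ℕ) : mu.part i ≤ lamF mu r N k i := by
  set T := tOf mu r N k with hT
  have h1 : T ≤ k := tOf_le mu r N k hr
  have h2 : mu.part T + (N - 1 - T) < mu.part k + (N - 1 - k) + r := by
    have := tOf_lt mu r N k hr; unfold bet at this; exact this
  have h4 : N - 1 - T ≤ mu.part k + (N - 1 - k) + r := by
    have := bet_tOf_ge mu r N k hr hk; unfold bet at this; exact this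
  simp only [lamF, ← hT, bet]
  rcases Nat.lt_trichotomy i T with hc | hc | hc
  · rw [if_pos hc]
  · rw [if_neg (by omega), if_pos hc]
    have he : mu.part i = mu.part T := by rw [hc]
    omega
  · by_cases hik : i ≤ k
    · rw [if_neg (by omega), if_neg (by omega), if_pos hik]
      have := mu.anti (show i - 1 ≤ i by omega)
      omega
    · rw [if_neg (by omega), if_neg (by omega), if_neg hik]

lemma lamOf_sub : Ptn.Sub mu (lamOf mu r N k hr hN hk hg) :=
  fun i => lamF_ge mu r N k hr hN hk hg i

lemma lamF_differ :
    {i | mu.part i ≠ (lamOf mu r N k hr hN hk hg).part i}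
      = Set.Icc (tOf mu r N k) k := by
  set T := tOf mu r N k with hT
  have h1 : T ≤ k := tOf_le mu r N k hr
  have h2 : mu.part T + (N - 1 - T) < mu.part k + (N - 1 - k) + r := by
    have := tOf_lt mu r N k hr; unfold bet at this; exact this
  have h4 : N - 1 - T ≤ mu.part k + (N - 1 - k) + r := by
    have := bet_tOf_ge mu r N k hr hk; unfold bet at this; exact this
  ext i
  simp only [Set.mem_setOf_eq, Set.mem_Icc, lamOf_part, lamF, ← hT, bet]
  rcases Nat.lt_trichotomy i T with hc | hc | hc
  · rw [if_pos hc]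
    simp; omega
  · rw [if_neg (by omega), if_pos hc]
    have he : mu.part i = mu.part T := by rw [hc]
    constructor
    · intro _; omega
    · intro _; omega
  · by_cases hik : i ≤ k
    · rw [if_neg (by omega), if_neg (by omega), if_pos hik]
      have := mu.anti (show i - 1 ≤ i by omega)
      constructor
      · intro _; omega
      · intro _; omega
    · rw [if_neg (by omega), if_neg (by omega), if_neg hik]
      simp; omega

lemma lamOf_ne : mu ≠ lamOf mu r N k hr hN hk hg := by
  intro h
  have h2 : (tOf mu r N k) ∈ {i | mu.part i ≠ (lamOf mu r N k hr hN hk hg).part i} := by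
    rw [lamF_differ mu r N k hr hN hk hg]
    exact Set.mem_Icc.2 ⟨le_refl _, tOf_le mu r N k hr⟩
  exact h2 (by rw [← h])

lemma lamOf_top : Ptn.top mu (lamOf mu r N k hr hN hk hg) = tOf mu r N k + 1 := by
  rw [Ptn.top, if_neg (lamOf_ne mu r N k hr hN hk hg),
    lamF_differ mu r N k hr hN hk hg, csInf_Icc (tOf_le mu r N k hr)]

lemma lamOf_bot : Ptn.bot mu (lamOf mu r N k hr hN hk hg) = k + 1 := by
  rw [Ptn.bot, if_neg (lamOf_ne mu r N k hr hN hk hg),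
    lamF_differ mu r N k hr hN hk hg, csSup_Icc (tOf_le mu r N k hr)]

lemma stripSgn_lamOf :
    stripSgn mu (lamOf mu r N k hr hN hk hg) = (-1) ^ (k - tOf mu r N k) := by
  rw [stripSgn, lamOf_bot mu r N k hr hN hk hg, lamOf_top mu r N k hr hN hk hg]
  congr 1
  omega

lemma altPoly_lamOf :
    altPoly N (lamOf mu r N k hr hN hk hg)
      = Dpoly N (fun j : Fin N =>
          shiftIns (bet mu N) (tOf mu r N k) k (bet mu N k + r) (j : ℕ)) := by
  rw [altPoly_eq_Dpoly]
  congr 1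
  funext j
  exact lamF_add_eq mu r N k hr hk (j : ℕ)

lemma good_term :
    Dpoly N (fun j : Fin N => Function.update (bet mu N) k (bet mu N k + r) (j : ℕ))
      = C (stripSgn mu (lamOf mu r N k hr hN hk hg))
          * altPoly N (lamOf mu r N k hr hN hk hg) := by
  rw [sortDet N (bet mu N) k hk (bet mu N k + r) (k - tOf mu r N k) (tOf mu r N k)
      (by have := tOf_le mu r N k hr; omega),
    altPoly_lamOf mu r N k hr hN hk hg, stripSgn_lamOf mu r N k hr hN hk hg]
  congr 1
  rw [map_pow, map_neg, map_one]

end Facts2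

lemma bad_term (mu : Ptn) (r N k : ℕ) (hr : 0 < r) (hk : k < N) (hb : ¬ GoodK mu r N k) :
    Dpoly N (fun j : Fin N => Function.update (bet mu N) k (bet mu N k + r) (j : ℕ)) = 0 := by
  unfold GoodK at hb
  push_neg at hb
  obtain ⟨j, hjN, hje⟩ := hb
  have hjk : j ≠ k := by
    intro h
    rw [h] at hje
    omega
  unfold Dpoly
  refine Matrix.det_zero_of_column_eq (i := (⟨j, hjN⟩ : Fin N)) (j := (⟨k, hk⟩ : Fin N))
    (by simp [Fin.ext_iff, hjk]) ?_
  intro i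
  simp [Matrix.of_apply, Function.update_apply, hjk, hje]
/-- Arithmetic characterization of an `r`-border strip `λ/μ` with rows `t+1 .. k+1`. -/
def Arith (mu lam : Ptn) (r N t k : ℕ) : Prop :=
  t ≤ k ∧ k < N ∧ lam.size = mu.size + r ∧ mu.part t < lam.part t ∧
    (∀ i, i < t → lam.part i = mu.part i) ∧ (∀ i, k < i → lam.part i = mu.part i) ∧
    (∀ i, t < i → i ≤ k → lam.part i = mu.part (i - 1) + 1)

section ArithFacts

variable (mu : Ptn) (r N k : ℕ) (hr : 0 < r) (hN : mu.size + r ≤ N) (hk : k < N)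
  (hg : GoodK mu r N k)

lemma arith_lamOf : Arith mu (lamOf mu r N k hr hN hk hg) r N (tOf mu r N k) k := by
  set T := tOf mu r N k with hT
  have h1 : T ≤ k := tOf_le mu r N k hr
  refine ⟨h1, hk, lamOf_size mu r N k hr hN hk hg, ?_, ?_, ?_, ?_⟩
  · have hd : T ∈ {i | mu.part i ≠ (lamOf mu r N k hr hN hk hg).part i} := by
      rw [lamF_differ mu r N k hr hN hk hg]; exact Set.mem_Icc.2 ⟨le_refl _, h1⟩
    have := lamOf_sub mu r N k hr hN hk hg T
    simp only [Set.mem_setOf_eq] at hd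
    omega
  · intro i hi
    rw [lamOf_part]
    simp only [lamF, ← hT]
    rw [if_pos hi]
  · intro i hi
    rw [lamOf_part]
    simp only [lamF, ← hT]
    rw [if_neg (by omega), if_neg (by omega), if_neg (by omega)]
  · intro i hi1 hi2
    rw [lamOf_part]
    simp only [lamF, ← hT]
    rw [if_neg (by omega), if_neg (by omega), if_pos hi2]

end ArithFacts

section ArithGood

variable (mu lam : Ptn) (r N t k : ℕ) (hr : 0 < r) (hN : mu.size + r ≤ N)
  (ha : Arith mu lam r N t k)

include hr hN ha

lemma arith_sum : lam.part t + k = mu.part k + r + t := by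
  obtain ⟨h1, hk, hsize, hlt, hlo, hhi, hmid⟩ := id ha
  have hsplit : ∀ f : ℕ → ℕ, ∑ i ∈ Finset.range N, f i =
      ((∑ i ∈ Finset.Ico 0 t, f i) + (∑ i ∈ Finset.Ico t (k + 1), f i)) +
        (∑ i ∈ Finset.Ico (k + 1) N, f i) := by
    intro f
    rw [Finset.range_eq_Ico,
      ← Finset.sum_Ico_consecutive f (Nat.zero_le (k + 1)) (show k + 1 ≤ N by omega),
      ← Finset.sum_Ico_consecutive f (Nat.zero_le t) (show t ≤ k + 1 by omega)]
  have hls : lam.size = ∑ i ∈ Finset.range N, lam.part i := lam.size_eq_sum (by omega)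
  have hms : mu.size = ∑ i ∈ Finset.range N, mu.part i := mu.size_eq_sum (by omega)
  rw [hls, hms, hsplit, hsplit] at hsize
  have e1 : ∑ i ∈ Finset.Ico 0 t, lam.part i = ∑ i ∈ Finset.Ico 0 t, mu.part i :=
    Finset.sum_congr rfl (fun i hi => hlo i (Finset.mem_Ico.1 hi).2)
  have e3 : ∑ i ∈ Finset.Ico (k + 1) N, lam.part i = ∑ i ∈ Finset.Ico (k + 1) N, mu.part i :=
    Finset.sum_congr rfl (fun i hi => hhi i (Finset.mem_Ico.1 hi).1)
  have e2 : ∑ i ∈ Finset.Ico t (k + 1), lam.part i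
      = lam.part t + ((∑ i ∈ Finset.Ico t k, mu.part i) + (k - t)) := by
    rw [Finset.sum_eq_sum_Ico_succ_bot (show t < k + 1 by omega)]
    congr 1
    have hc : ∀ i ∈ Finset.Ico (t + 1) (k + 1), lam.part i = mu.part (i - 1) + 1 :=
      fun i hi => by
        have h := Finset.mem_Ico.1 hi
        exact hmid i (by omega) (by omega)
    rw [Finset.sum_congr rfl hc, Finset.sum_add_distrib, Finset.sum_const, Nat.card_Ico,
      smul_eq_mul, mul_one]
    congr 1
    · rw [Finset.sum_Ico_eq_sum_range, Finset.sum_Ico_eq_sum_range]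
      refine Finset.sum_congr (by congr 1 <;> omega) (fun j hj => by congr 1; omega)
    · omega
  have e2' : ∑ i ∈ Finset.Ico t (k + 1), mu.part i
      = (∑ i ∈ Finset.Ico t k, mu.part i) + mu.part k :=
    Finset.sum_Ico_succ_top (by omega) _
  rw [e1, e3, e2, e2'] at hsize
  omega

lemma arith_betlam : lam.part t + (N - 1 - t) = bet mu N k + r := by
  obtain ⟨h1, hk, _, _, _, _, _⟩ := id ha
  have := arith_sum mu lam r N t k hr hN ha
  unfold bet
  omega

lemma arith_good : GoodK mu r N k := by
  obtain ⟨h1, hk, hsize, hlt, hlo, hhi, hmid⟩ := id ha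
  have hkey := arith_betlam mu lam r N t k hr hN ha
  unfold bet at hkey
  intro j hj hc
  rcases Nat.lt_or_ge j t with hjt | hjt
  · have hje : lam.part j = mu.part j := hlo j hjt
    have hbl : bet lam N t < bet lam N j := bet_lt lam N hjt (by omega)
    unfold bet at hbl hc
    omega
  · have hble : bet mu N j ≤ bet mu N t := bet_le mu N hjt
    unfold bet at hble hc
    omega

lemma arith_tOf : tOf mu r N k = t := by
  obtain ⟨h1, hk, hsize, hlt, hlo, hhi, hmid⟩ := id ha
  have hkey := arith_betlam mu lam r N t k hr hN ha
  unfold bet at hkey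
  have hmem : t ∈ {i | bet mu N i < bet mu N k + r} := by
    simp only [Set.mem_setOf_eq]
    unfold bet
    omega
  have hlb : ∀ i, i ∈ {i | bet mu N i < bet mu N k + r} → t ≤ i := by
    intro i hi
    by_contra hcon
    have hje : lam.part i = mu.part i := hlo i (by omega)
    have hbl : bet lam N t < bet lam N i := bet_lt lam N (by omega) (by omega)
    simp only [Set.mem_setOf_eq] at hi
    unfold bet at hbl hi
    omega
  have hsm := Nat.sInf_mem (⟨t, hmem⟩ : Set.Nonempty {i | bet mu N i < bet mu N k + r})
  have h2 := Nat.sInf_le hmem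
  have := hlb _ hsm
  unfold tOf
  omega

lemma arith_eq_lamOf (hkN : k < N) (hg : GoodK mu r N k) :
    lam = lamOf mu r N k hr hN hkN hg := by
  obtain ⟨h1, hk, hsize, hlt, hlo, hhi, hmid⟩ := id ha
  have hkey := arith_betlam mu lam r N t k hr hN ha
  unfold bet at hkey
  have htt := arith_tOf mu lam r N t k hr hN ha
  refine Ptn.ext' (fun i => ?_)
  rw [lamOf_part]
  simp only [lamF, htt]
  rcases Nat.lt_trichotomy i t with hc | hc | hc
  · rw [if_pos hc]; exact hlo i hc
  · rw [if_neg (by omega), if_pos hc]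
    subst hc
    unfold bet
    omega
  · by_cases hik : i ≤ k
    · rw [if_neg (by omega), if_neg (by omega), if_pos hik]
      exact hmid i hc hik
    · rw [if_neg (by omega), if_neg (by omega), if_neg hik]
      exact hhi i (by omega)

end ArithGood
lemma skew_mem (mu lam : Ptn) (c : ℕ × ℕ) :
    c ∈ Ptn.skew mu lam ↔ mu.part c.1 ≤ c.2 ∧ c.2 < lam.part c.1 := by
  simp only [Ptn.skew, Ptn.cells, Set.mem_diff, Set.mem_setOf_eq]
  omega

lemma adj_symm {c d : ℕ × ℕ} (h : Adjacent c d) : Adjacent d c := by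
  unfold Adjacent at *
  omega

/-- The step relation used in `ConnectedSet` for the skew diagram. -/
def SRel (mu lam : Ptn) : ℕ × ℕ → ℕ × ℕ → Prop :=
  fun x y => y ∈ Ptn.skew mu lam ∧ Adjacent x y

lemma rtg_mem (mu lam : Ptn) {x y : ℕ × ℕ} (h : Relation.ReflTransGen (SRel mu lam) x y) :
    y = x ∨ y ∈ Ptn.skew mu lam := by
  induction h with
  | refl => exact Or.inl rfl
  | tail p s ih => exact Or.inr s.1

lemma rtg_symm (mu lam : Ptn) {x y : ℕ × ℕ} (hx : x ∈ Ptn.skew mu lam)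
    (h : Relation.ReflTransGen (SRel mu lam) x y) :
    Relation.ReflTransGen (SRel mu lam) y x := by
  induction h with
  | refl => exact .refl
  | @tail b c p s ih =>
    refine Relation.ReflTransGen.head ⟨?_, adj_symm s.2⟩ ih
    rcases rtg_mem mu lam p with h1 | h1
    · rw [h1]; exact hx
    · exact h1

lemma rtg_horiz (mu lam : Ptn) (i c : ℕ) (hc : mu.part i ≤ c) (n : ℕ) :
    c + n < lam.part i → Relation.ReflTransGen (SRel mu lam) (i, c) (i, c + n) := by
  induction n with
  | zero => intro _; exact .refl
  | succ n ih =>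
    intro hn
    refine Relation.ReflTransGen.tail (ih (by omega)) ⟨(skew_mem mu lam _).2 ⟨?_, ?_⟩, ?_⟩
    · simp only; omega
    · simp only; omega
    · exact Or.inl ⟨rfl, Or.inl rfl⟩

section Geom

variable (mu lam : Ptn) (r N t k : ℕ)

lemma arith_scell (ha : Arith mu lam r N t k) :
    ∀ x : ℕ × ℕ, x ∈ Ptn.skew mu lam → (t ≤ x.1 ∧ x.1 ≤ k) := by
  obtain ⟨h1, hk, hsize, hlt, hlo, hhi, hmid⟩ := id ha
  intro x hx
  have hm := (skew_mem mu lam x).1 hx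
  constructor
  · by_contra hcon
    have := hlo x.1 (by omega)
    omega
  · by_contra hcon
    have := hhi x.1 (by omega)
    omega

lemma arith_rows (ha : Arith mu lam r N t k) :
    ∀ i, t ≤ i → i ≤ k → mu.part i < lam.part i := by
  obtain ⟨h1, hk, hsize, hlt, hlo, hhi, hmid⟩ := id ha
  intro i hti hik
  rcases eq_or_lt_of_le hti with h | h
  · rw [← h]; exact hlt
  · have := hmid i h hik
    have := mu.anti (show i - 1 ≤ i by omega)
    omega

lemma arith_sub (ha : Arith mu lam r N t k) : Ptn.Sub mu lam := by
  obtain ⟨h1, hk, hsize, hlt, hlo, hhi, hmid⟩ := id ha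
  intro i
  rcases Nat.lt_or_ge i t with h | h
  · rw [hlo i h]
  · rcases le_or_gt i k with h2 | h2
    · exact le_of_lt (arith_rows mu lam r N t k ha i h h2)
    · rw [hhi i h2]

lemma arith_no2 (ha : Arith mu lam r N t k) :
    ∀ c ∈ Ptn.skew mu lam, (c.1 + 1, c.2 + 1) ∉ Ptn.skew mu lam := by
  obtain ⟨h1, hk, hsize, hlt, hlo, hhi, hmid⟩ := id ha
  intro c hc hcon
  have hm1 := (skew_mem mu lam c).1 hc
  have hm2 := (skew_mem mu lam _).1 hcon
  simp only at hm2
  have hc1 := arith_scell mu lam r N t k ha c hc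
  have hc2 := arith_scell mu lam r N t k ha _ hcon
  simp only at hc2
  have := hmid (c.1 + 1) (by omega) (by omega)
  simp only [Nat.add_sub_cancel] at this
  omega

lemma arith_base (ha : Arith mu lam r N t k) (i : ℕ) (hti : t ≤ i) (hik : i < k) :
    Relation.ReflTransGen (SRel mu lam) (i, mu.part i) (i + 1, mu.part (i + 1)) := by
  obtain ⟨h1, hk, hsize, hlt, hlo, hhi, hmid⟩ := id ha
  have hanti : mu.part (i + 1) ≤ mu.part i := mu.anti (by omega)
  have hval : lam.part (i + 1) = mu.part i + 1 := by
    have := hmid (i + 1) (by omega) (by omega)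
    simpa using this
  have h1c : ((i + 1 : ℕ), mu.part i) ∈ Ptn.skew mu lam :=
    (skew_mem mu lam _).2 ⟨by simp only; omega, by simp only; omega⟩
  have path1 : Relation.ReflTransGen (SRel mu lam) (i, mu.part i) (i + 1, mu.part i) :=
    Relation.ReflTransGen.single ⟨h1c, Or.inr ⟨rfl, Or.inl rfl⟩⟩
  have path2 : Relation.ReflTransGen (SRel mu lam) (i + 1, mu.part (i + 1))
      (i + 1, mu.part (i + 1) + (mu.part i - mu.part (i + 1))) :=
    rtg_horiz mu lam (i + 1) (mu.part (i + 1)) (le_refl _) _ (by omega)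
  have hrw : mu.part (i + 1) + (mu.part i - mu.part (i + 1)) = mu.part i := by omega
  rw [hrw] at path2
  have h2c : ((i + 1 : ℕ), mu.part (i + 1)) ∈ Ptn.skew mu lam :=
    (skew_mem mu lam _).2 ⟨le_refl _, by
      have := arith_rows mu lam r N t k ha (i + 1) (by omega) (by omega)
      simpa using this⟩
  exact path1.trans (rtg_symm mu lam h2c path2)

lemma arith_chain (ha : Arith mu lam r N t k) (d : ℕ) :
    t + d ≤ k → Relation.ReflTransGen (SRel mu lam) (t, mu.part t) (t + d, mu.part (t + d)) := by
  induction d with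
  | zero => intro _; exact .refl
  | succ d ih =>
    intro hd
    exact (ih (by omega)).trans (arith_base mu lam r N t k ha (t + d) (by omega) (by omega))

lemma arith_reach (ha : Arith mu lam r N t k) (x : ℕ × ℕ) (hx : x ∈ Ptn.skew mu lam) :
    Relation.ReflTransGen (SRel mu lam) (t, mu.part t) x := by
  obtain ⟨i, cx⟩ := x
  have hc := arith_scell mu lam r N t k ha _ hx
  simp only at hc
  have hm := (skew_mem mu lam _).1 hx
  simp only at hm
  have hchain := arith_chain mu lam r N t k ha (i - t) (by omega)
  rw [show t + (i - t) = i by omega] at hchain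
  have hh := rtg_horiz mu lam i (mu.part i) (le_refl _) (cx - mu.part i)
    (by omega)
  rw [show mu.part i + (cx - mu.part i) = cx by omega] at hh
  exact hchain.trans hh

lemma arith_conn (ha : Arith mu lam r N t k) : ConnectedSet (Ptn.skew mu lam) := by
  intro c hc d hd
  have htcell : ((t : ℕ), mu.part t) ∈ Ptn.skew mu lam :=
    (skew_mem mu lam _).2 ⟨le_refl _, by
      have := arith_rows mu lam r N t k ha t (le_refl _) ha.1
      simpa using this⟩
  have p1 : Relation.ReflTransGen (SRel mu lam) c (t, mu.part t) :=
    rtg_symm mu lam htcell (arith_reach mu lam r N t k ha c hc)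
  exact p1.trans (arith_reach mu lam r N t k ha d hd)

lemma arith_isBS (ha : Arith mu lam r N t k) :
    lam.size = mu.size + r ∧ Ptn.Sub mu lam ∧ IsBorderStrip r mu lam := by
  obtain ⟨h1, hk, hsize, hlt, hlo, hhi, hmid⟩ := id ha
  exact ⟨hsize, arith_sub mu lam r N t k ha,
    arith_sub mu lam r N t k ha, hsize, arith_conn mu lam r N t k ha,
    arith_no2 mu lam r N t k ha⟩

end Geom
lemma bs_arith (mu lam : Ptn) (r N : ℕ) (hr : 0 < r) (hN : mu.size + r ≤ N)
    (hsub : Ptn.Sub mu lam) (hsize : lam.size = mu.size + r) (hconn : ConnectedSet (Ptn.skew mu lam))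
    (hno2 : ∀ c ∈ Ptn.skew mu lam, (c.1 + 1, c.2 + 1) ∉ Ptn.skew mu lam) :
    ∃ t k, Arith mu lam r N t k := by
  set S0 := {i | mu.part i ≠ lam.part i} with hS0
  have hne : S0.Nonempty := by
    by_contra hcon
    rw [Set.not_nonempty_iff_eq_empty] at hcon
    have hall : ∀ i, lam.part i = mu.part i := fun i => by
      by_contra hd
      have : i ∈ S0 := fun h => hd h.symm
      rw [hcon] at this
      exact this
    have : lam = mu := Ptn.ext' hall
    rw [this] at hsize
    omega
  have hbddmem : ∀ i ∈ S0, i < lam.size := fun i hi => by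
    have hine : mu.part i ≠ lam.part i := hi
    have h1 : lam.part i ≠ 0 := by have := hsub i; omega
    exact lam.lt_size_of_part_ne_zero h1
  have hbdd : BddAbove S0 := ⟨lam.size, fun i hi => le_of_lt (hbddmem i hi)⟩
  set t := sInf S0 with hts
  set b := sSup S0 with hbs
  have ht : t ∈ S0 := Nat.sInf_mem hne
  have hb : b ∈ S0 := Nat.sSup_mem hne hbdd
  have htb : t ≤ b := Nat.sInf_le hb
  have hkN : b < N := by
    have := hbddmem b hb
    omega
  have hbelow : ∀ i, i < t → lam.part i = mu.part i := fun i hi => by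
    have h2 := Nat.notMem_of_lt_sInf (hts ▸ hi)
    simp only [hS0, Set.mem_setOf_eq, not_not] at h2
    omega
  have habove : ∀ i, b < i → lam.part i = mu.part i := fun i hi => by
    by_contra hd
    have hmem : i ∈ S0 := fun h => hd h.symm
    have := le_csSup hbdd hmem
    omega
  have htne : mu.part t ≠ lam.part t := ht
  have hbne : mu.part b ≠ lam.part b := hb
  have htcell : ((t : ℕ), mu.part t) ∈ Ptn.skew mu lam :=
    (skew_mem mu lam _).2 ⟨le_refl _, by have := hsub t; simp only; omega⟩
  have hbcell : ((b : ℕ), mu.part b) ∈ Ptn.skew mu lam :=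
    (skew_mem mu lam _).2 ⟨le_refl _, by have := hsub b; simp only; omega⟩
  have hpath : Relation.ReflTransGen (SRel mu lam) (t, mu.part t) (b, mu.part b) :=
    hconn _ htcell _ hbcell
  -- all rows between t and b are nonempty
  have hrows : ∀ i, t ≤ i → i ≤ b → mu.part i < lam.part i := by
    intro i hti hib
    have hlt : mu.part i ≤ lam.part i := hsub i
    rcases eq_or_lt_of_le hti with h | h
    · rw [h] at htne; omega
    rcases eq_or_lt_of_le hib with h2 | h2
    · rw [← h2] at hbne; omega
    by_contra hcon
    have heq : mu.part i = lam.part i := by omega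
    have hinv : ∀ x y : ℕ × ℕ, Relation.ReflTransGen (SRel mu lam) x y → x.1 < i → y.1 < i := by
      intro x y hxy hx
      induction hxy with
      | refl => exact hx
      | @tail m c p s ih =>
        have hy := (skew_mem mu lam c).1 s.1
        have hrowne : c.1 ≠ i := by
          intro hrr
          rw [hrr] at hy
          omega
        have hadj := s.2
        unfold Adjacent at hadj
        omega
    have := hinv _ _ hpath (by simp only; omega)
    simp only at this
    omega
  -- consecutive rows overlap
  have hoverlap : ∀ i, t ≤ i → i < b → mu.part i < lam.part (i + 1) := by
    intro i hti hib
    by_contra hcon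
    have hno : lam.part (i + 1) ≤ mu.part i := by omega
    have hinv : ∀ x y : ℕ × ℕ, Relation.ReflTransGen (SRel mu lam) x y →
        (x ∈ Ptn.skew mu lam ∧ x.1 ≤ i) → (y ∈ Ptn.skew mu lam ∧ y.1 ≤ i) := by
      intro x y hxy hx
      induction hxy with
      | refl => exact hx
      | @tail m c p s ih =>
        obtain ⟨hm1, hm2⟩ := ih
        refine ⟨s.1, ?_⟩
        have hyc := (skew_mem mu lam c).1 s.1
        have hmc := (skew_mem mu lam m).1 hm1
        rcases s.2 with ⟨hrow, _⟩ | ⟨hcol, hud⟩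
        · omega
        · rcases hud with h | h
          · -- m.1 + 1 = c.1
            by_contra hcc
            have hc1 : c.1 = i + 1 := by omega
            have hm1i : m.1 = i := by omega
            rw [hc1] at hyc
            rw [hm1i] at hmc
            omega
          · omega
    have := hinv _ _ hpath ⟨htcell, by simp only; omega⟩
    simp only at this
    omega
  -- no 2x2 gives the upper bound
  have hub : ∀ i, t ≤ i → i < b → lam.part (i + 1) ≤ mu.part i + 1 := by
    intro i hti hib
    by_contra hcon
    have h1c : ((i : ℕ), mu.part i) ∈ Ptn.skew mu lam :=
      (skew_mem mu lam _).2 ⟨le_refl _, by simp only; exact hrows i hti (by omega)⟩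
    have h2c : ((i + 1 : ℕ), mu.part i + 1) ∈ Ptn.skew mu lam :=
      (skew_mem mu lam _).2 ⟨by
        have := mu.anti (show i ≤ i + 1 by omega)
        simp only; omega, by simp only; omega⟩
    exact hno2 _ h1c h2c
  refine ⟨t, b, htb, hkN, hsize, by have := hsub t; omega, hbelow, habove, ?_⟩
  intro i hti hik
  have h1 := hoverlap (i - 1) (by omega) (by omega)
  have h2 := hub (i - 1) (by omega) (by omega)
  rw [show i - 1 + 1 = i by omega] at h1 h2
  omega
/-- Total version of `lamOf`. -/
def lamOf' (mu : Ptn) (r N k : ℕ) : Ptn :=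
  if h : 0 < r ∧ mu.size + r ≤ N ∧ k < N ∧ GoodK mu r N k then
    lamOf mu r N k h.1 h.2.1 h.2.2.1 h.2.2.2
  else mu

/-- **Murnaghan--Nakayama rule** (alternant form, the case `m = 1`): for a partition `μ` and
positive integers `r` and `N ≥ |μ| + r`, in `ℤ[x_1,…,x_N]` one has
`a_{μ+δ(N)} · p_r = Σ_λ sgn(λ/μ) · a_{λ+δ(N)}`, the sum over all partitions `λ` of size
`|μ| + r` with `μ ⊆ λ` such that `λ/μ` is an `r`-border strip. -/
theorem murnaghan_nakayama (mu : Ptn) (r N : ℕ) (hr : 0 < r) (hN : mu.size + r ≤ N) :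
    altPoly N mu * pPoly N r =
      ∑ᶠ (lam : Ptn)
        (_ : lam.size = mu.size + r ∧ Ptn.Sub mu lam ∧ IsBorderStrip r mu lam),
        (C (stripSgn mu lam) : MvPolynomial (Fin N) ℤ) * altPoly N lam := by
  classical
  set G : Finset ℕ := (Finset.range N).filter (fun k => GoodK mu r N k) with hG
  have hmemG : ∀ k, k ∈ G ↔ k < N ∧ GoodK mu r N k := fun k => by
    simp [hG, Finset.mem_filter, Finset.mem_range]
  have hlam' : ∀ k (hk : k < N) (hg : GoodK mu r N k),
      lamOf' mu r N k = lamOf mu r N k hr hN hk hg := fun k hk hg => by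
    rw [lamOf', dif_pos ⟨hr, hN, hk, hg⟩]
  have hinj : ∀ k1 ∈ G, ∀ k2 ∈ G, lamOf' mu r N k1 = lamOf' mu r N k2 → k1 = k2 := by
    intro k1 h1 k2 h2 he
    obtain ⟨hk1, hg1⟩ := (hmemG k1).1 h1
    obtain ⟨hk2, hg2⟩ := (hmemG k2).1 h2
    rw [hlam' k1 hk1 hg1, hlam' k2 hk2 hg2] at he
    have hd1 := lamF_differ mu r N k1 hr hN hk1 hg1
    have hd2 := lamF_differ mu r N k2 hr hN hk2 hg2
    rw [he] at hd1
    have hs : Set.Icc (tOf mu r N k1) k1 = Set.Icc (tOf mu r N k2) k2 := hd1.symm.trans hd2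
    have m1 : k1 ∈ Set.Icc (tOf mu r N k1) k1 :=
      Set.mem_Icc.2 ⟨tOf_le mu r N k1 hr, le_refl _⟩
    have m2 : k2 ∈ Set.Icc (tOf mu r N k2) k2 :=
      Set.mem_Icc.2 ⟨tOf_le mu r N k2 hr, le_refl _⟩
    rw [hs] at m1
    rw [← hs] at m2
    have e1 := (Set.mem_Icc.1 m1).2
    have e2 := (Set.mem_Icc.1 m2).2
    omega
  have hiff : ∀ lam : Ptn,
      (lam.size = mu.size + r ∧ Ptn.Sub mu lam ∧ IsBorderStrip r mu lam)
        ↔ lam ∈ G.image (lamOf' mu r N) := by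
    intro lam
    constructor
    · rintro ⟨hs, hsub, hbs⟩
      obtain ⟨hsub2, hsize2, hconn, hn2⟩ := hbs
      obtain ⟨t, k, ha⟩ := bs_arith mu lam r N hr hN hsub hs hconn hn2
      have hg := arith_good mu lam r N t k hr hN ha
      have hk : k < N := ha.2.1
      have heq := arith_eq_lamOf mu lam r N t k hr hN ha hk hg
      refine Finset.mem_image.2 ⟨k, (hmemG k).2 ⟨hk, hg⟩, ?_⟩
      rw [hlam' k hk hg, ← heq]
    · intro hmem
      obtain ⟨k, hkG, hke⟩ := Finset.mem_image.1 hmem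
      obtain ⟨hk, hg⟩ := (hmemG k).1 hkG
      rw [hlam' k hk hg] at hke
      subst hke
      exact arith_isBS mu _ r N (tOf mu r N k) k (arith_lamOf mu r N k hr hN hk hg)
  have main : altPoly N mu * pPoly N r
      = ∑ k ∈ G, (C (stripSgn mu (lamOf' mu r N k)) : MvPolynomial (Fin N) ℤ)
          * altPoly N (lamOf' mu r N k) := by
    rw [altPoly_eq_Dpoly, detMulP]
    have hterm : ∀ kf : Fin N,
        Dpoly N (fun j => bet mu N ↑j + if j = kf then r else 0)
          = Dpoly N (fun j : Fin N =>
              Function.update (bet mu N) (kf : ℕ) (bet mu N (kf : ℕ) + r) (j : ℕ)) := by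
      intro kf
      congr 1
      funext j
      rw [Function.update_apply]
      by_cases h : j = kf
      · rw [if_pos h, if_pos (by rw [h]), h]
      · rw [if_neg h, if_neg (fun hc => h (Fin.ext hc)), Nat.add_zero]
    rw [Finset.sum_congr rfl (fun kf _ => hterm kf)]
    rw [Fin.sum_univ_eq_sum_range (fun k => Dpoly N (fun j : Fin N =>
      Function.update (bet mu N) k (bet mu N k + r) (j : ℕ))) N]
    rw [← Finset.sum_filter_add_sum_filter_not (Finset.range N) (fun k => GoodK mu r N k)]
    have hzero : ∑ k ∈ (Finset.range N).filter (fun k => ¬ GoodK mu r N k),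
        Dpoly N (fun j : Fin N => Function.update (bet mu N) k (bet mu N k + r) (j : ℕ)) = 0 :=
      Finset.sum_eq_zero (fun k hkmem => by
        have h1 := Finset.mem_filter.1 hkmem
        exact bad_term mu r N k hr (Finset.mem_range.1 h1.1) h1.2)
    rw [hzero, add_zero]
    refine Finset.sum_congr rfl (fun k hkmem => ?_)
    obtain ⟨hk, hg⟩ := (hmemG k).1 hkmem
    rw [hlam' k hk hg]
    exact good_term mu r N k hr hN hk hg
  rw [main]
  rw [finsum_cond_eq_sum_of_cond_iff
    (fun lam => (C (stripSgn mu lam) : MvPolynomial (Fin N) ℤ) * altPoly N lam)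
    (fun {lam} _ => hiff lam)]
  rw [Finset.sum_image (fun k1 h1 k2 h2 he => hinj k1 h1 k2 h2 he)]
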